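/- arXiv:1812.07799 — 5 statements merged into one kernel-verified Lean document; each statement's English description precedes it below -/
import Mathlib

section
/- If H is a finite-index subgroup of a group G, and G is commensurably coHopfian, then H is commensurably coHopfian. -/
/-- A group is commensurably coHopfian if no finite-index subgroup embeds
(via an injective group homomorphism) onto an infinite-index subgroup. -/
def IsCommensurablyCoHopfian (G : Type*) [Group G] : Prop :=
  ∀ (K : Subgroup G), K.FiniteIndex → ∀ φ : K →* G, Function.Injective φ → φ.range.index ≠ 0

theorem stmt0 {G : Type*} [Group G] (H : Subgroup G) (hH : H.FiniteIndex)
    (hG : IsCommensurablyCoHopfian G) : IsCommensurablyCoHopfian H := by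
  intro K hK φ hφ
  set K' : Subgroup G := K.map H.subtype with hK'
  have hsub : Function.Injective H.subtype := Subgroup.subtype_injective H
  have e : K ≃* K' := Subgroup.equivMapOfInjective K H.subtype hsub
  have hker : H.subtype.ker = ⊥ := H.ker_subtype
  have hrange : H.subtype.range = H := H.range_subtype
  have hindK' : K'.index = K.index * H.index := by
    rw [hK', Subgroup.index_map, hker, sup_bot_eq, hrange]
  have hK'fin : K'.FiniteIndex := by
    constructor
    rw [hindK']
    exact mul_ne_zero hK.index_ne_zero hH.index_ne_zero
  set ψ : K' →* G := H.subtype.comp (φ.comp e.symm.toMonoidHom) with hψ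
  have hψinj : Function.Injective ψ := by
    simp only [hψ, MonoidHom.coe_comp]
    exact hsub.comp (hφ.comp e.symm.injective)
  have hψrange : ψ.range = (φ.range).map H.subtype := by
    rw [hψ, MonoidHom.range_comp]
    congr 1
    rw [MonoidHom.range_comp, MonoidHom.range_eq_top_of_surjective _ e.symm.surjective,
      ← MonoidHom.range_eq_map]
  have := hG K' hK'fin ψ hψinj
  rw [hψrange, Subgroup.index_map, hker, sup_bot_eq, hrange] at this
  intro h0
  exact this (by rw [h0, zero_mul])
end

section
/- If H is a finite-index subgroup of a group G, and H is commensurably coHopfian, then G is commensurably coHopfian. -/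
theorem stmt1 {G : Type*} [Group G] (H : Subgroup G) (hH : H.FiniteIndex)
    (hHc : IsCommensurablyCoHopfian H) : IsCommensurablyCoHopfian G := by
  intro K hK φ hφ h0
  haveI : K.FiniteIndex := hK
  set M : Subgroup G := K ⊓ H with hM
  haveI : M.FiniteIndex := inferInstance
  let i : ↥M →* ↥K := Subgroup.inclusion inf_le_left
  let φ' : ↥M →* G := φ.comp i
  have hφ' : Function.Injective φ' := hφ.comp (Subgroup.inclusion_injective _)
  let P : Subgroup ↥M := Subgroup.comap φ' H
  have hP : P.FiniteIndex := by
    constructor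
    rw [Subgroup.index_comap]
    exact Subgroup.FiniteIndex.index_ne_zero (H := H.subgroupOf φ'.range)
  let j : ↥M →* ↥H := Subgroup.inclusion inf_le_right
  have hj : Function.Injective j := Subgroup.inclusion_injective _
  let K'' : Subgroup ↥H := Subgroup.map j P
  have hK'' : K''.FiniteIndex := by
    constructor
    rw [Subgroup.index_map_of_injective _ hj, Subgroup.inclusion_range]
    exact Nat.mul_ne_zero hP.index_ne_zero
      (Subgroup.FiniteIndex.index_ne_zero (H := M.subgroupOf H))
  let e : ↥P ≃* ↥K'' := Subgroup.equivMapOfInjective P j hj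
  let φ'' : ↥P →* ↥H := (φ'.comp P.subtype).codRestrict H (fun p => p.2)
  have hφ'' : Function.Injective φ'' := fun a b hab =>
    Subgroup.subtype_injective P (hφ' (congrArg Subtype.val hab))
  let ψ : ↥K'' →* ↥H := φ''.comp e.symm.toMonoidHom
  have hψ : Function.Injective ψ := hφ''.comp e.symm.injective
  have hne : ψ.range.index ≠ 0 := hHc K'' hK'' ψ hψ
  apply hne
  -- show ψ.range has index 0 in H, using that φ.range has index 0 in G
  have hQle : Subgroup.map H.subtype ψ.range ≤ φ.range := by
    rintro g ⟨x, ⟨y, rfl⟩, rfl⟩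
    exact ⟨i ((e.symm y : ↥P) : ↥M), rfl⟩
  have hQ : (Subgroup.map H.subtype ψ.range).index = 0 := by
    have := Subgroup.index_dvd_of_le hQle
    rw [h0] at this
    exact Nat.eq_zero_of_zero_dvd this
  rw [Subgroup.index_map_subtype] at hQ
  rcases Nat.mul_eq_zero.mp hQ with h | h
  · exact h
  · exact absurd h hH.index_ne_zero
end

section
/- Being commensurably coHopfian is invariant under abstract commensurability: if groups G₁ and G₂ have isomorphic finite-index subgroups, then G₁ is commensurably coHopfian if and only if G₂ is. -/
/-!
A group `G` is commensurably coHopfian iff for any two injective homomorphisms `f g : K →* G`,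
if `f` has finite-index image then so does `g`. For an injective `j : A →* B` with finite-index
image, this property passes from `B` to `A` by composing with `j`, and from `A` to `B` by
restricting `f` and `g` to the finite-index subgroup of `K` that both send into `j.range` and
lifting them through `j`. Apply this to `H₁ ↪ G₁` and to `H₁ ≃* H₂ ↪ G₂`.
-/

open Subgroup

lemma Subgroup.finiteIndex_comap {A B : Type*} [Group A] [Group B] (H : Subgroup B)
    [H.FiniteIndex] (f : A →* B) : (H.comap f).FiniteIndex := by
  rw [finiteIndex_iff, index_comap]
  exact (isFiniteRelIndex_of_finiteIndex (K := f.range)).relIndex_ne_zero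

lemma Subgroup.finiteIndex_map_iff_of_injective {A B : Type*} [Group A] [Group B]
    {f : A →* B} (hf : Function.Injective f) (H : Subgroup A) :
    (H.map f).FiniteIndex ↔ H.FiniteIndex ∧ f.range.FiniteIndex := by
  simp only [finiteIndex_iff, H.index_map_of_injective hf, mul_ne_zero_iff]

lemma MonoidHom.exists_comp_eq_of_range_le {A B L : Type*} [Group A] [Group B] [Group L]
    {j : A →* B} (hj : Function.Injective j) {f : L →* B} (h : f.range ≤ j.range) :
    ∃ f₀ : L →* A, j.comp f₀ = f :=
  ⟨(MonoidHom.ofInjective hj).symm.toMonoidHom.comp (f.codRestrict j.range fun x => h ⟨x, rfl⟩),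
    MonoidHom.ext fun _ => MonoidHom.apply_ofInjective_symm hj _⟩

lemma MonoidHom.range_comp_of_surjective {A B C : Type*} [Group A] [Group B] [Group C]
    (g : B →* C) {f : A →* B} (hf : Function.Surjective f) : (g.comp f).range = g.range := by
  rw [MonoidHom.range_comp, f.range_eq_top_of_surjective hf, ← MonoidHom.range_eq_map]

lemma IsCommensurablyCoHopfian.finiteIndex_range {G K : Type*} [Group G] [Group K]
    (h : IsCommensurablyCoHopfian G) {f g : K →* G} (hf : Function.Injective f)
    (hg : Function.Injective g) (hfi : f.range.FiniteIndex) : g.range.FiniteIndex := by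
  let e := MonoidHom.ofInjective hf
  rw [finiteIndex_iff, ← g.range_comp_of_surjective (f := e.symm.toMonoidHom) e.symm.surjective]
  exact h f.range hfi _ (hg.comp e.symm.injective)

section Transfer

variable {A B : Type*} [Group A] [Group B] {j : A →* B}

lemma IsCommensurablyCoHopfian.domain_of_injective (h : IsCommensurablyCoHopfian B)
    (hj : Function.Injective j) (hji : j.range.FiniteIndex) : IsCommensurablyCoHopfian A := by
  intro K hK φ hφ
  have hKj : (j.comp K.subtype).range.FiniteIndex := by
    rw [MonoidHom.range_comp, range_subtype, finiteIndex_map_iff_of_injective hj]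
    exact ⟨hK, hji⟩
  have hφj := h.finiteIndex_range (g := j.comp φ) (hj.comp K.subtype_injective) (hj.comp hφ) hKj
  rw [MonoidHom.range_comp, finiteIndex_map_iff_of_injective hj] at hφj
  exact hφj.1.index_ne_zero

lemma IsCommensurablyCoHopfian.finiteIndex_range_of_range_le (h : IsCommensurablyCoHopfian A)
    (hj : Function.Injective j) (hji : j.range.FiniteIndex) {K : Type*} [Group K]
    {f g : K →* B} (hf : Function.Injective f) (hg : Function.Injective g)
    (hfj : f.range ≤ j.range) (hgj : g.range ≤ j.range) (hfi : f.range.FiniteIndex) :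
    g.range.FiniteIndex := by
  obtain ⟨f₀, rfl⟩ := MonoidHom.exists_comp_eq_of_range_le hj hfj
  obtain ⟨g₀, rfl⟩ := MonoidHom.exists_comp_eq_of_range_le hj hgj
  rw [MonoidHom.range_comp, finiteIndex_map_iff_of_injective hj] at hfi ⊢
  exact ⟨h.finiteIndex_range (Function.Injective.of_comp hf) (Function.Injective.of_comp hg)
    hfi.1, hji⟩

lemma IsCommensurablyCoHopfian.codomain_of_injective (h : IsCommensurablyCoHopfian A)
    (hj : Function.Injective j) (hji : j.range.FiniteIndex) : IsCommensurablyCoHopfian B := by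
  intro K hK φ hφ
  let L : Subgroup K := j.range.comap K.subtype ⊓ j.range.comap φ
  have hL : L.FiniteIndex := by
    have := finiteIndex_comap j.range K.subtype
    have := finiteIndex_comap j.range φ
    infer_instance
  have hLB : (K.subtype.comp L.subtype).range.FiniteIndex := by
    rw [MonoidHom.range_comp, range_subtype, finiteIndex_map_iff_of_injective K.subtype_injective,
      range_subtype]
    exact ⟨hL, hK⟩
  have hφL := h.finiteIndex_range_of_range_le (f := K.subtype.comp L.subtype)
    (g := φ.comp L.subtype) hj hji (K.subtype_injective.comp L.subtype_injective)
    (hφ.comp L.subtype_injective)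
    (by rw [MonoidHom.range_comp, range_subtype, map_le_iff_le_comap]; exact inf_le_left)
    (by rw [MonoidHom.range_comp, range_subtype, map_le_iff_le_comap]; exact inf_le_right) hLB
  rw [MonoidHom.range_comp] at hφL
  exact (finiteIndex_of_le (map_le_range φ L.subtype.range)).index_ne_zero

lemma isCommensurablyCoHopfian_iff_of_injective (hj : Function.Injective j)
    (hji : j.range.FiniteIndex) : IsCommensurablyCoHopfian A ↔ IsCommensurablyCoHopfian B :=
  ⟨fun h => h.codomain_of_injective hj hji, fun h => h.domain_of_injective hj hji⟩

end Transfer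

theorem stmt2 {G₁ G₂ : Type*} [Group G₁] [Group G₂]
    (H₁ : Subgroup G₁) (H₂ : Subgroup G₂)
    (h₁ : H₁.FiniteIndex) (h₂ : H₂.FiniteIndex) (e : Nonempty (H₁ ≃* H₂)) :
    IsCommensurablyCoHopfian G₁ ↔ IsCommensurablyCoHopfian G₂ := by
  obtain ⟨e⟩ := e
  have hrange₂ : (H₂.subtype.comp e.toMonoidHom).range = H₂ := by
    rw [H₂.subtype.range_comp_of_surjective e.surjective, range_subtype]
  rw [← isCommensurablyCoHopfian_iff_of_injective H₁.subtype_injective (by rwa [range_subtype]),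
    isCommensurablyCoHopfian_iff_of_injective (j := H₂.subtype.comp e.toMonoidHom)
      (H₂.subtype_injective.comp e.injective) (by rwa [hrange₂])]
end

section
/- If G' is a finite-index subgroup of a group G and φ : G' → G is an injective homomorphism whose image has infinite index in G, then for any finite-index subgroup H ≤ G, the subgroup φ⁻¹(H) ∩ H has finite index in H and φ(φ⁻¹(H) ∩ H) has infinite index in H. -/
theorem stmt5 {G : Type*} [Group G] (G' : Subgroup G) (hG' : G'.FiniteIndex)
    (φ : G' →* G) (hφ : Function.Injective φ) (hinf : φ.range.index = 0)
    (H : Subgroup G) (hH : H.FiniteIndex) :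
    (((H.comap φ ⊓ H.subgroupOf G').map G'.subtype).subgroupOf H).FiniteIndex ∧
      (((H.comap φ ⊓ H.subgroupOf G').map φ).subgroupOf H).index = 0 := by
  set K : Subgroup G' := H.comap φ ⊓ H.subgroupOf G' with hK
  have h1 : (H.comap φ).FiniteIndex := by
    constructor
    rw [Subgroup.index_comap]
    exact Subgroup.FiniteIndex.index_ne_zero (H := H.subgroupOf φ.range)
  have h2 : K.FiniteIndex := inferInstance
  have h3 : (K.map G'.subtype).FiniteIndex := by
    constructor
    rw [Subgroup.index_map, Subgroup.ker_subtype, Subgroup.range_subtype, sup_bot_eq]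
    exact Nat.mul_ne_zero h2.index_ne_zero hG'.index_ne_zero
  constructor
  · exact Subgroup.instFiniteIndex_subgroupOf _ _
  · have hle : K.map φ ≤ H := by
      rintro x ⟨k, hk, rfl⟩
      exact hk.1
    have hidx : (K.map φ).index = 0 := by
      have : φ.range.index ∣ (K.map φ).index :=
        Subgroup.index_dvd_of_le (Subgroup.map_le_range φ K)
      simpa [hinf] using this
    have := Subgroup.relIndex_mul_index hle
    rw [hidx] at this
    have hrel : (K.map φ).relIndex H = 0 := by
      rcases Nat.mul_eq_zero.mp this with h | h
      · exact h
      · exact absurd h hH.index_ne_zero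
    exact hrel
end

section
/- For every k ≥ 3 and every sequence of negative integers χ̂₁, …, χ̂_k, there exist positive integers D, d, d₁, …, d_k such that for each i (indices mod k): (d + d_i)·χ̂_i + 2·d_i·χ̂_{i-1} + d_i·χ̂_i = D·χ̂_i. -/
theorem stmt6 (k : ℕ) (hk : 3 ≤ k) (χ : ZMod k → ℤ) (hχ : ∀ i, χ i < 0) :
    ∃ (D d : ℤ) (di : ZMod k → ℤ), 0 < D ∧ 0 < d ∧ (∀ i, 0 < di i) ∧
      ∀ i : ZMod k, (d + di i) * χ i + 2 * di i * χ (i - 1) + di i * χ i = D * χ i := by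
  haveI : NeZero k := ⟨by omega⟩
  set S : ZMod k → ℤ := fun i => χ (i - 1) + χ i with hS
  have hSneg : ∀ i, S i < 0 := fun i => by
    have h1 := hχ (i - 1); have h2 := hχ i
    simp only [hS]; omega
  set M : ℤ := ∏ i, S i with hM
  have hdvd : ∀ i, S i ∣ M := fun i => Finset.dvd_prod_of_mem _ (Finset.mem_univ i)
  have hMne : M ≠ 0 := Finset.prod_ne_zero_iff.mpr (fun i _ => (hSneg i).ne)
  refine ⟨1 + 2 * M * M, 1, fun i => M * (M / S i) * χ i, ?_, one_pos, ?_, ?_⟩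
  · nlinarith [mul_self_pos.mpr hMne]
  · intro i
    obtain ⟨q, hq⟩ := hdvd i
    have hq' : M / S i = q := by
      rw [hq]; exact Int.mul_ediv_cancel_left _ (hSneg i).ne
    have hqne : q ≠ 0 := by
      intro h; apply hMne; rw [hq, h, mul_zero]
    have hq2 : 0 < q * q := mul_self_pos.mpr hqne
    have := hSneg i
    have := hχ i
    beta_reduce; rw [hq', hq]
    have h3 : 0 < q * q * (S i * χ i) :=
      mul_pos hq2 (mul_pos_of_neg_of_neg ‹S i < 0› ‹χ i < 0›)
    nlinarith [h3]
  · intro i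
    obtain ⟨q, hq⟩ := hdvd i
    have hq' : M / S i = q := by
      rw [hq]; exact Int.mul_ediv_cancel_left _ (hSneg i).ne
    have hSi : S i = χ (i - 1) + χ i := rfl
    beta_reduce; rw [hq']
    have : M = (χ (i - 1) + χ i) * q := by rw [hq, hSi]
    linear_combination (-2 * M * χ i) * this
end
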